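/- arXiv:2007.08011 — 2 statements merged into one kernel-verified Lean document; each statement's English description precedes it below -/
import Mathlib

section
/- Let 1 < q ≤ 2, ν0 > 0 and ν1 ≥ 0, and define A(Q) = (ν0 + ν1|Q|)^{q−2} Q on d×d real matrices. Then there exists a constant C depending only on ν0, ν1, q such that for all d×d matrices Q, P: |A(Q) − A(P)| ≤ C|Q − P|, where |·| denotes the Frobenius norm. -/
noncomputable section

namespace NonNewtonian

abbrev Mat (d : ℕ) := Fin d → Fin d → ℝ

/-- Frobenius norm of a `d × d` matrix. -/
def frob {d : ℕ} (Q : Mat d) : ℝ := Real.sqrt (∑ i, ∑ j, (Q i j) ^ 2)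

/-- The power-law tensor `A(Q) = (ν0 + ν1|Q|)^{q-2} Q` (real power). -/
def Aten {d : ℕ} (ν0 ν1 q : ℝ) (Q : Mat d) : Mat d :=
  fun i j => (ν0 + ν1 * frob Q) ^ (q - 2) * Q i j

/-- Embedding of matrices into Euclidean space. -/
def toE {d : ℕ} (Q : Mat d) : EuclideanSpace ℝ (Fin d × Fin d) :=
  WithLp.toLp 2 (fun p => Q p.1 p.2)

lemma frob_eq_norm {d : ℕ} (Q : Mat d) : frob Q = ‖toE Q‖ := by
  rw [EuclideanSpace.norm_eq, frob]
  congr 1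
  rw [Fintype.sum_prod_type]
  simp [toE, sq_abs]

lemma toE_sub {d : ℕ} (Q P : Mat d) :
    toE (fun i j => Q i j - P i j) = toE Q - toE P := by
  ext p; simp [toE]

lemma frob_nonneg {d : ℕ} (Q : Mat d) : 0 ≤ frob Q := Real.sqrt_nonneg _

lemma frob_smul {d : ℕ} (c : ℝ) (Q : Mat d) :
    frob (fun i j => c * Q i j) = |c| * frob Q := by
  have : toE (fun i j => c * Q i j) = c • toE Q := by ext p; simp [toE]
  rw [frob_eq_norm, this, norm_smul, Real.norm_eq_abs, ← frob_eq_norm]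

lemma frob_add_le {d : ℕ} (Q P : Mat d) :
    frob (fun i j => Q i j + P i j) ≤ frob Q + frob P := by
  have : toE (fun i j => Q i j + P i j) = toE Q + toE P := by ext p; simp [toE]
  rw [frob_eq_norm, this, frob_eq_norm Q, frob_eq_norm P]
  exact norm_add_le _ _

lemma frob_sub_frob_le {d : ℕ} (Q P : Mat d) :
    frob Q - frob P ≤ frob (fun i j => Q i j - P i j) := by
  rw [frob_eq_norm, frob_eq_norm P, frob_eq_norm, toE_sub]
  exact norm_sub_norm_le _ _

/-- Key scalar estimate via the mean value theorem. -/
lemma scalar_key (q ν0 ν1 : ℝ) (hq1 : 1 < q) (hq2 : q ≤ 2) (hν0 : 0 < ν0) (hν1 : 0 ≤ ν1)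
    {t s : ℝ} (ht : 0 ≤ t) (hts : t ≤ s) :
    ((ν0 + ν1 * t) ^ (q - 2) - (ν0 + ν1 * s) ^ (q - 2)) * t
      ≤ (2 - q) * ν0 ^ (q - 2) * (s - t) := by
  set a := ν0 + ν1 * t with ha
  set b := ν0 + ν1 * s with hb
  have hν1t : 0 ≤ ν1 * t := mul_nonneg hν1 ht
  have ha0 : 0 < a := by positivity
  have hab : a ≤ b := by nlinarith
  rcases eq_or_lt_of_le hab with heq | hlt
  · rw [← heq]
    have : (0:ℝ) ≤ (2 - q) * ν0 ^ (q - 2) * (s - t) :=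
      mul_nonneg (mul_nonneg (by linarith) (Real.rpow_pos_of_pos hν0 _).le)
        (sub_nonneg.mpr hts)
    simpa using this
  · have hb0 : 0 < b := lt_of_lt_of_le ha0 hab
    -- MVT for x ^ (q - 2) on [a, b]
    obtain ⟨c, hc, hcs⟩ := exists_hasDerivAt_eq_slope (fun x => x ^ (q - 2))
      (fun x => (q - 2) * x ^ (q - 2 - 1)) hlt
      (fun x hx => (Real.continuousAt_rpow_const x (q - 2)
          (Or.inl (ne_of_gt (lt_of_lt_of_le ha0 hx.1)))).continuousWithinAt)
      (fun x hx => Real.hasDerivAt_rpow_const (Or.inl (ne_of_gt (lt_trans ha0 hx.1))))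
    have hc0 : 0 < c := lt_trans ha0 hc.1
    -- a^(q-2) - b^(q-2) = (2-q) * c^(q-3) * (b-a)
    have hslope : a ^ (q - 2) - b ^ (q - 2) = (2 - q) * c ^ (q - 2 - 1) * (b - a) := by
      have hba : b - a ≠ 0 := sub_ne_zero.mpr (ne_of_gt hlt)
      field_simp at hcs
      nlinarith [hcs]
    rw [hslope]
    -- c^(q-3) ≤ a^(q-3), and (2-q)*a^(q-3)*(b-a)*t ≤ (2-q)*a^(q-2)*(s-t) ≤ ...
    have hca : a ^ (q - 2 - 1) ≥ c ^ (q - 2 - 1) :=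
      Real.rpow_le_rpow_of_nonpos ha0 hc.1.le (by linarith)
    have h2q : (0:ℝ) ≤ 2 - q := by linarith
    have hba' : 0 ≤ b - a := by linarith
    have step1 : (2 - q) * c ^ (q - 2 - 1) * (b - a) * t
        ≤ (2 - q) * a ^ (q - 2 - 1) * (b - a) * t :=
      mul_le_mul_of_nonneg_right
        (mul_le_mul_of_nonneg_right (mul_le_mul_of_nonneg_left hca h2q) hba') ht
    have hba_eq : b - a = ν1 * (s - t) := by rw [ha, hb]; ring
    -- ν1 * t ≤ a
    have hν1ta : ν1 * t ≤ a := by rw [ha]; linarith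
    have hapow : a ^ (q - 2 - 1) * a = a ^ (q - 2) := by
      nth_rewrite 2 [← Real.rpow_one a]
      rw [← Real.rpow_add ha0]; ring_nf
    have hst : 0 ≤ s - t := by linarith
    have hap : 0 < a ^ (q - 2 - 1) := Real.rpow_pos_of_pos ha0 _
    have step2 : (2 - q) * a ^ (q - 2 - 1) * (b - a) * t
        ≤ (2 - q) * a ^ (q - 2) * (s - t) := by
      rw [hba_eq, ← hapow]
      nlinarith [mul_le_mul_of_nonneg_left hν1ta hap.le, mul_nonneg h2q hst]
    have step3 : (2 - q) * a ^ (q - 2) * (s - t) ≤ (2 - q) * ν0 ^ (q - 2) * (s - t) := by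
      have : a ^ (q - 2) ≤ ν0 ^ (q - 2) :=
        Real.rpow_le_rpow_of_nonpos hν0 (by rw [ha]; linarith) (by linarith)
      exact mul_le_mul_of_nonneg_right (mul_le_mul_of_nonneg_left this h2q) hst
    linarith

/-- Main estimate under the normalization `frob P ≤ frob Q`. -/
lemma Aten_diff_le {d : ℕ} (q : ℝ) (hq1 : 1 < q) (hq2 : q ≤ 2)
  (ν0 ν1 : ℝ) (hν0 : 0 < ν0) (hν1 : 0 ≤ ν1) (Q P : Mat d) (hPQ : frob P ≤ frob Q) :
  frob (fun i j => Aten ν0 ν1 q Q i j - Aten ν0 ν1 q P i j)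
    ≤ (3 - q) * ν0 ^ (q - 2) * frob (fun i j => Q i j - P i j) := by
  set fQ := (ν0 + ν1 * frob Q) ^ (q - 2) with hfQ
  set fP := (ν0 + ν1 * frob P) ^ (q - 2) with hfP
  have hP0 : 0 ≤ frob P := frob_nonneg P
  have hQ0 : 0 ≤ frob Q := frob_nonneg Q
  have haP : 0 < ν0 + ν1 * frob P := by positivity
  have haQ : 0 < ν0 + ν1 * frob Q := by positivity
  have hfQpos : 0 < fQ := Real.rpow_pos_of_pos haQ _
  have hfQP : fQ ≤ fP :=
    Real.rpow_le_rpow_of_nonpos haP (by nlinarith) (by linarith)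
  have hfQν0 : fQ ≤ ν0 ^ (q - 2) :=
    Real.rpow_le_rpow_of_nonpos hν0 (by nlinarith) (by linarith)
  -- decomposition
  have hdecomp : (fun i j => Aten ν0 ν1 q Q i j - Aten ν0 ν1 q P i j)
      = fun i j => fQ * (Q i j - P i j) + (fQ - fP) * P i j := by
    funext i j
    simp only [Aten, ← hfQ, ← hfP]
    ring
  rw [hdecomp]
  have htri := frob_add_le (fun i j => fQ * (Q i j - P i j)) (fun i j => (fQ - fP) * P i j)
  rw [frob_smul fQ (fun i j => Q i j - P i j), frob_smul (fQ - fP) P] at htri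
  refine htri.trans ?_
  have h1 : |fQ| = fQ := abs_of_pos hfQpos
  have h2 : |fQ - fP| = fP - fQ := by rw [abs_sub_comm]; exact abs_of_nonneg (by linarith)
  rw [h1, h2]
  have hkey := scalar_key q ν0 ν1 hq1 hq2 hν0 hν1 hP0 hPQ
  rw [← hfP, ← hfQ] at hkey
  have hd0 : 0 ≤ frob (fun i j => Q i j - P i j) := frob_nonneg _
  have hrev : frob Q - frob P ≤ frob (fun i j => Q i j - P i j) := frob_sub_frob_le Q P
  have hC : 0 < (2 - q) * ν0 ^ (q - 2) ∨ 0 ≤ (2 - q) * ν0 ^ (q - 2) := by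
    right
    have := Real.rpow_pos_of_pos hν0 (q - 2)
    nlinarith
  have hν0pow : 0 < ν0 ^ (q - 2) := Real.rpow_pos_of_pos hν0 _
  have h2q : (0:ℝ) ≤ 2 - q := by linarith
  have hkey2 : (fP - fQ) * frob P ≤ (2 - q) * ν0 ^ (q - 2) * frob (fun i j => Q i j - P i j) :=
    hkey.trans (mul_le_mul_of_nonneg_left hrev (mul_nonneg h2q hν0pow.le))
  have := mul_le_mul_of_nonneg_right hfQν0 hd0
  nlinarith

/-- **Lipschitz estimate for the power-law tensor** (`ν0 > 0`, `1 < q ≤ 2`):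
`|A(Q) - A(P)| ≤ C |Q - P|` with `C = C(ν0, ν1, q)`. -/
theorem Aten_lipschitz_estimate (d : ℕ) (q : ℝ) (hq1 : 1 < q) (hq2 : q ≤ 2)
  (ν0 ν1 : ℝ) (hν0 : 0 < ν0) (hν1 : 0 ≤ ν1) :
  ∃ C : ℝ, 0 < C ∧ ∀ Q P : Mat d,
    frob (fun i j => Aten ν0 ν1 q Q i j - Aten ν0 ν1 q P i j)
      ≤ C * frob (fun i j => Q i j - P i j) := by
  refine ⟨(3 - q) * ν0 ^ (q - 2), ?_, ?_⟩
  · have := Real.rpow_pos_of_pos hν0 (q - 2)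
    nlinarith
  · intro Q P
    rcases le_total (frob P) (frob Q) with h | h
    · exact Aten_diff_le q hq1 hq2 ν0 ν1 hν0 hν1 Q P h
    · have := Aten_diff_le q hq1 hq2 ν0 ν1 hν0 hν1 P Q h
      have e1 : frob (fun i j => Aten ν0 ν1 q Q i j - Aten ν0 ν1 q P i j)
          = frob (fun i j => Aten ν0 ν1 q P i j - Aten ν0 ν1 q Q i j) := by
        unfold frob; congr 1; apply Finset.sum_congr rfl; intros
        apply Finset.sum_congr rfl; intros; ring
      have e2 : frob (fun i j => Q i j - P i j) = frob (fun i j => P i j - Q i j) := by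
        unfold frob; congr 1; apply Finset.sum_congr rfl; intros
        apply Finset.sum_congr rfl; intros; ring
      rw [e1, e2]
      exact this

end NonNewtonian
end
end

section
/- (Improved Hölder inequality.) Let f, g be smooth real-valued functions on T^d and let r ∈ [1,∞]. Then there is a constant C_r (independent of f, g, λ) such that for every λ ∈ ℕ: |f · g(λ·)|_{L^r(T^d)} ≤ |f|_{L^r(T^d)} |g|_{L^r(T^d)} + C_r λ^{−1/r} |f|_{C¹(T^d)} |g|_{L^r(T^d)}. -/
open MeasureTheory ENNReal NNReal
open Set

noncomputable section

namespace NonNewtonian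

abbrev Pt (d : ℕ) := Fin d → ℝ

/-- The fundamental domain `[0,1]^d` of the torus `T^d = ℝ^d/ℤ^d`. -/
def box (d : ℕ) : Set (Pt d) := Set.Icc 0 1

/-- Lebesgue measure restricted to the fundamental domain. -/
def μbox (d : ℕ) : Measure (Pt d) := volume.restrict (box d)

/-- `ℤ^d`-periodicity (functions on the torus). -/
def ZPer {d : ℕ} {α : Type*} (f : Pt d → α) : Prop :=
  ∀ (x : Pt d) (m : Fin d → ℤ), f (x + fun i => (m i : ℝ)) = f x

/-- The `C¹` norm `sup |f| + sup |∇f|` of a function on the torus. -/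
def C1norm (d : ℕ) (f : Pt d → ℝ) : ℝ :=
  (⨆ x : Pt d, |f x|) + ⨆ x : Pt d, ‖fderiv ℝ f x‖

lemma exists_rep (d : ℕ) (x : Pt d) :
    ∃ (y : Pt d) (m : Fin d → ℤ), y ∈ box d ∧ x = y + fun i => (m i : ℝ) := by
  refine ⟨fun i => Int.fract (x i), fun i => ⌊x i⌋, ⟨?_, ?_⟩, ?_⟩
  · intro i; exact Int.fract_nonneg _
  · intro i; exact (Int.fract_lt_one _).le
  · funext i
    show x i = Int.fract (x i) + (⌊x i⌋ : ℝ)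
    rw [Int.fract]; ring

lemma bddAbove_of_per {d : ℕ} (h : Pt d → ℝ) (hc : Continuous h)
    (hper : ∀ (x : Pt d) (m : Fin d → ℤ), h (x + fun i => (m i : ℝ)) = h x) :
    BddAbove (Set.range h) := by
  obtain ⟨M, hM⟩ := (isCompact_Icc (a := (0 : Pt d)) (b := 1)).bddAbove_image hc.continuousOn
  refine ⟨M, ?_⟩
  rintro _ ⟨x, rfl⟩
  obtain ⟨y, m, hy, rfl⟩ := exists_rep d x
  rw [hper]
  exact hM ⟨y, hy, rfl⟩

lemma fderiv_comp_add {d : ℕ} (f : Pt d → ℝ) (hf : Differentiable ℝ f) (c x : Pt d) :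
    fderiv ℝ (fun y => f (y + c)) x = fderiv ℝ f (x + c) := by
  have h1 : HasFDerivAt (fun y : Pt d => y + c) (ContinuousLinearMap.id ℝ (Pt d)) x :=
    (hasFDerivAt_id x).add_const c
  simpa [Function.comp_def] using ((hf (x + c)).hasFDerivAt.comp x h1).fderiv

lemma fderiv_per {d : ℕ} (f : Pt d → ℝ) (hf : Differentiable ℝ f)
    (hper : ∀ (x : Pt d) (m : Fin d → ℤ), f (x + fun i => (m i : ℝ)) = f x)
    (x : Pt d) (m : Fin d → ℤ) :
    fderiv ℝ f (x + fun i => (m i : ℝ)) = fderiv ℝ f x := by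
  have hfun : (fun y => f (y + fun i => (m i : ℝ))) = f := funext fun y => hper y m
  conv_rhs => rw [← hfun]
  rw [fderiv_comp_add f hf _ x]

lemma lintegral_comp_nsmul {d : ℕ} (N : ℕ) (hN : 1 ≤ N) (φ : Pt d → ℝ≥0∞)
    (hφ : Measurable φ) :
    ∫⁻ x, φ ((N : ℝ) • x) = ((N : ℝ≥0∞) ^ d)⁻¹ * ∫⁻ x, φ x := by
  have hN0 : (N : ℝ) ≠ 0 := by positivity
  have : ∫⁻ x, φ ((N : ℝ) • x) = ∫⁻ y, φ y ∂(Measure.map ((N : ℝ) • ·) volume) :=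
    (lintegral_map hφ (measurable_const_smul _)).symm
  rw [this, Measure.map_addHaar_smul volume hN0, lintegral_smul_measure]
  congr 1
  rw [abs_of_nonneg (by positivity), ENNReal.ofReal_inv_of_pos (by positivity)]
  congr 1
  rw [ENNReal.ofReal_pow (by positivity)]
  simp [Module.finrank_fintype_fun_eq_card]

lemma setLIntegral_translate {d : ℕ} (φ : Pt d → ℝ≥0∞) (c : Pt d) (s : Set (Pt d)) :
    ∫⁻ y in s, φ y = ∫⁻ x in (fun x => x + c) ⁻¹' s, φ (x + c) :=
  ((measurePreserving_add_right volume c).setLIntegral_comp_preimage_emb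
    (measurableEmbedding_addRight c) φ s).symm



section cubes
variable {d N : ℕ}

def lo (N : ℕ) (k : Fin d → Fin N) : Pt d := fun i => (k i : ℝ) / N
def hi (N : ℕ) (k : Fin d → Fin N) : Pt d := fun i => ((k i : ℝ) + 1) / N
def Q (N : ℕ) (k : Fin d → Fin N) : Set (Pt d) := Set.Icc (lo N k) (hi N k)
def kv (N : ℕ) (k : Fin d → Fin N) : Pt d := fun i => (k i : ℝ)

lemma Q_subset_box (hN : 1 ≤ N) (k : Fin d → Fin N) : Q N k ⊆ box d := by
  have hN0 : (0:ℝ) < N := by exact_mod_cast hN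
  intro x hx
  rw [Q, Set.mem_Icc] at hx
  rw [box, Set.mem_Icc]
  constructor
  · intro i
    have h1 : (0:ℝ) ≤ (k i : ℝ) / N := by positivity
    simpa using h1.trans (hx.1 i)
  · intro i
    have h2 : hi N k i ≤ 1 := by
      rw [hi, div_le_one hN0]
      have := (k i).isLt
      exact_mod_cast Nat.succ_le_of_lt this
    simpa using (hx.2 i).trans h2

lemma box_subset_iUnion (hN : 1 ≤ N) : box d ⊆ ⋃ k : Fin d → Fin N, Q N k := by
  have hN0 : (0:ℝ) < N := by exact_mod_cast hN
  intro x hx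
  rw [box, Set.mem_Icc] at hx
  have main : ∀ t : ℝ, 0 ≤ t → t ≤ 1 →
      ((min (⌊t * N⌋).toNat (N - 1) : ℕ) : ℝ) / N ≤ t ∧
        t ≤ (((min (⌊t * N⌋).toNat (N - 1) : ℕ) : ℝ) + 1) / N := by
    intro t ht0 ht1
    have hfl : (0:ℤ) ≤ ⌊t * N⌋ := Int.floor_nonneg.2 (by positivity)
    have hcast : (((⌊t * N⌋).toNat : ℕ) : ℝ) = (⌊t * N⌋ : ℝ) := by
      exact_mod_cast Int.toNat_of_nonneg hfl
    constructor
    · rw [div_le_iff₀ hN0]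
      have h1 : ((min (⌊t * N⌋).toNat (N - 1) : ℕ) : ℝ) ≤ (((⌊t * N⌋).toNat : ℕ) : ℝ) := by
        exact_mod_cast min_le_left _ _
      refine h1.trans ?_
      rw [hcast]
      exact Int.floor_le _
    · rw [le_div_iff₀ hN0]
      rcases min_cases (⌊t * N⌋).toNat (N - 1) with ⟨heq, _⟩ | ⟨heq, _⟩ <;> rw [heq]
      · rw [hcast]
        have := Int.lt_floor_add_one (t * N)
        linarith
      · have hc : ((N - 1 : ℕ) : ℝ) = (N : ℝ) - 1 := by
          have h1 : 1 ≤ N := hN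
          push_cast [h1]
          ring
        rw [hc]
        nlinarith
  have hk : ∀ i, min (⌊x i * N⌋).toNat (N - 1) < N := fun i =>
    lt_of_le_of_lt (min_le_right _ _) (Nat.sub_lt (by omega) one_pos)
  refine Set.mem_iUnion.2 ⟨fun i => ⟨min (⌊x i * N⌋).toNat (N - 1), hk i⟩, ?_, ?_⟩
  · intro i
    have h0 : (0:ℝ) ≤ x i := by simpa using hx.1 i
    have h1 : x i ≤ 1 := by simpa using hx.2 i
    exact (main (x i) h0 h1).1
  · intro i
    have h0 : (0:ℝ) ≤ x i := by simpa using hx.1 i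
    have h1 : x i ≤ 1 := by simpa using hx.2 i
    exact (main (x i) h0 h1).2

lemma Q_aedisjoint (hN : 1 ≤ N) : Pairwise (Function.onFun (AEDisjoint (volume : Measure (Pt d))) (Q N)) := by
  have hN0 : (0:ℝ) < N := by exact_mod_cast hN
  intro k k' hkk
  obtain ⟨i, hi_ne⟩ : ∃ i, k i ≠ k' i := by
    by_contra h
    push_neg at h
    exact hkk (funext h)
  have key : (hi N k ⊓ hi N k') i - (lo N k ⊔ lo N k') i ≤ 0 := by
    rcases lt_or_gt_of_ne (fun h : (k i : ℕ) = (k' i : ℕ) => hi_ne (Fin.ext h)) with h | h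
    · have h1 : (hi N k ⊓ hi N k') i ≤ ((k i : ℝ) + 1) / N := by
        simp only [Pi.inf_apply, hi]
        exact inf_le_left
      have h2 : ((k' i : ℝ)) / N ≤ (lo N k ⊔ lo N k') i := by
        simp only [Pi.sup_apply, lo]
        exact le_sup_right
      have h3 : ((k i : ℝ) + 1) / N ≤ ((k' i : ℝ)) / N := by
        gcongr
        have : (k i : ℕ) + 1 ≤ (k' i : ℕ) := h
        exact_mod_cast this
      linarith
    · have h1 : (hi N k ⊓ hi N k') i ≤ ((k' i : ℝ) + 1) / N := by
        simp only [Pi.inf_apply, hi]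
        exact inf_le_right
      have h2 : ((k i : ℝ)) / N ≤ (lo N k ⊔ lo N k') i := by
        simp only [Pi.sup_apply, lo]
        exact le_sup_left
      have h3 : ((k' i : ℝ) + 1) / N ≤ ((k i : ℝ)) / N := by
        gcongr
        have : (k' i : ℕ) + 1 ≤ (k i : ℕ) := h
        exact_mod_cast this
      linarith
  show volume (Q N k ∩ Q N k') = 0
  rw [Q, Q, Set.Icc_inter_Icc, Real.volume_Icc_pi]
  apply Finset.prod_eq_zero (Finset.mem_univ i)
  rw [ENNReal.ofReal_eq_zero]
  exact key


lemma volume_Q (hN : 1 ≤ N) (k : Fin d → Fin N) :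
    volume (Q N k) = ((N : ℝ≥0∞) ^ d)⁻¹ := by
  have hN0 : (0:ℝ) < N := by exact_mod_cast hN
  rw [Q, Real.volume_Icc_pi]
  have h1 : ∀ i : Fin d, ENNReal.ofReal (hi N k i - lo N k i) = ((N : ℝ≥0∞))⁻¹ := by
    intro i
    have : hi N k i - lo N k i = 1 / N := by rw [hi, lo]; ring
    rw [this, one_div, ENNReal.ofReal_inv_of_pos hN0, ENNReal.ofReal_natCast]
  simp only [h1]
  rw [Finset.prod_const, ENNReal.inv_pow, Finset.card_univ, Fintype.card_fin]

lemma norm_sub_le_of_mem_Q (hN : 1 ≤ N) (k : Fin d → Fin N) {x y : Pt d}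
    (hx : x ∈ Q N k) (hy : y ∈ Q N k) : ‖x - y‖ ≤ 1 / N := by
  have hN0 : (0:ℝ) < N := by exact_mod_cast hN
  rw [Q, Set.mem_Icc] at hx hy
  rw [← dist_eq_norm]
  rw [dist_pi_le_iff (by positivity)]
  intro i
  rw [Real.dist_eq, abs_sub_le_iff]
  have hlen : hi N k i - lo N k i = 1 / N := by rw [hi, lo]; ring
  have h1 := hx.1 i; have h2 := hx.2 i; have h3 := hy.1 i; have h4 := hy.2 i
  constructor <;> linarith

lemma setLIntegral_G_scaled (hN : 1 ≤ N) (k : Fin d → Fin N) (G : Pt d → ℝ≥0∞)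
    (hG : Measurable G)
    (hGper : ∀ (x : Pt d) (m : Fin d → ℤ), G (x + fun i => (m i : ℝ)) = G x) :
    ∫⁻ x in Q N k, G ((N : ℝ) • x) = ((N : ℝ≥0∞) ^ d)⁻¹ * ∫⁻ z in box d, G z := by
  have hN0 : (0:ℝ) < N := by exact_mod_cast hN
  have hmem : ∀ x : Pt d, x ∈ Q N k ↔ (N : ℝ) • x ∈ Set.Icc (kv N k) (kv N k + 1) := by
    intro x
    rw [Q, Set.mem_Icc, Set.mem_Icc]
    simp only [Pi.le_def, Pi.smul_apply, smul_eq_mul, Pi.add_apply, Pi.one_apply, lo, hi, kv]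
    constructor
    · rintro ⟨h1, h2⟩
      exact ⟨fun i => by rw [← div_le_iff₀' hN0]; exact h1 i,
             fun i => by rw [← le_div_iff₀' hN0]; exact h2 i⟩
    · rintro ⟨h1, h2⟩
      exact ⟨fun i => by rw [div_le_iff₀' hN0]; exact h1 i,
             fun i => by rw [le_div_iff₀' hN0]; exact h2 i⟩
  calc ∫⁻ x in Q N k, G ((N : ℝ) • x)
      = ∫⁻ x, (Set.Icc (kv N k) (kv N k + 1)).indicator G ((N : ℝ) • x) := by
        simp only [Q]
        rw [← lintegral_indicator (measurableSet_Icc : MeasurableSet (Set.Icc (lo N k) (hi N k)))]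
        congr 1
        funext x
        by_cases hx : x ∈ Q N k
        · rw [Set.indicator_of_mem (show x ∈ Set.Icc (lo N k) (hi N k) from hx),
            Set.indicator_of_mem ((hmem x).1 hx)]
        · rw [Set.indicator_of_notMem (show x ∉ Set.Icc (lo N k) (hi N k) from hx),
            Set.indicator_of_notMem (fun h => hx ((hmem x).2 h))]
    _ = ((N : ℝ≥0∞) ^ d)⁻¹ * ∫⁻ y, (Set.Icc (kv N k) (kv N k + 1)).indicator G y :=
        lintegral_comp_nsmul N hN _ (hG.indicator measurableSet_Icc)
    _ = ((N : ℝ≥0∞) ^ d)⁻¹ * ∫⁻ y in Set.Icc (kv N k) (kv N k + 1), G y := by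
        rw [lintegral_indicator measurableSet_Icc]
    _ = ((N : ℝ≥0∞) ^ d)⁻¹ * ∫⁻ z in box d, G z := by
        congr 1
        rw [setLIntegral_translate G (kv N k) (Set.Icc _ _), Set.preimage_add_const_Icc]
        have hbox : Set.Icc (kv N k - kv N k) (kv N k + 1 - kv N k) = box d := by
          rw [box]; congr 1 <;> funext i <;> simp
        rw [hbox]
        apply setLIntegral_congr_fun measurableSet_Icc
        intro x _
        have : (x + kv N k) = x + fun i => (((k i : ℕ) : ℤ) : ℝ) := by
          funext i; simp [kv]
        show G (x + kv N k) = G x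
        rw [this, hGper x (fun i => ((k i : ℕ) : ℤ))]

lemma key_lemma (hN : 1 ≤ N) (F H G : Pt d → ℝ≥0∞)
    (hH : Measurable H) (hG : Measurable G)
    (hGper : ∀ (x : Pt d) (m : Fin d → ℤ), G (x + fun i => (m i : ℝ)) = G x)
    (hFH : ∀ x y : Pt d, ‖x - y‖ ≤ 1 / N → F x ≤ H y) :
    ∫⁻ x in box d, F x * G ((N : ℝ) • x)
      ≤ (∫⁻ y in box d, H y) * ∫⁻ z in box d, G z := by
  have hNd0 : ((N : ℝ≥0∞) ^ d) ≠ 0 := by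
    apply pow_ne_zero
    exact_mod_cast Nat.one_le_iff_ne_zero.mp hN
  have hNdtop : ((N : ℝ≥0∞) ^ d) ≠ ⊤ := by
    exact ENNReal.pow_ne_top (ENNReal.natCast_ne_top N)
  have hGN : Measurable fun x : Pt d => G ((N : ℝ) • x) :=
    hG.comp (measurable_const_smul _)
  calc ∫⁻ x in box d, F x * G ((N : ℝ) • x)
      ≤ ∫⁻ x in ⋃ k : Fin d → Fin N, Q N k, F x * G ((N : ℝ) • x) :=
        lintegral_mono_set (box_subset_iUnion hN)
    _ = ∑' k : Fin d → Fin N, ∫⁻ x in Q N k, F x * G ((N : ℝ) • x) :=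
        lintegral_iUnion₀ (fun k => measurableSet_Icc.nullMeasurableSet) (Q_aedisjoint hN) _
    _ ≤ ∑' k : Fin d → Fin N, (∫⁻ y in Q N k, H y) * ∫⁻ z in box d, G z := by
        refine ENNReal.tsum_le_tsum fun k => ?_
        set c := ((N : ℝ≥0∞) ^ d) * ∫⁻ y in Q N k, H y with hc
        have hbound : ∀ x ∈ Q N k, F x ≤ c := by
          intro x hx
          have h1 : F x * volume (Q N k) ≤ ∫⁻ y in Q N k, H y := by
            rw [← setLIntegral_const (Q N k) (F x)]
            exact setLIntegral_mono hH fun y hy =>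
              hFH x y (norm_sub_le_of_mem_Q hN k hx hy)
          rw [volume_Q hN k] at h1
          calc F x = ((N : ℝ≥0∞) ^ d) * (F x * ((N : ℝ≥0∞) ^ d)⁻¹) := by
                rw [mul_comm (F x), ← mul_assoc, ENNReal.mul_inv_cancel hNd0 hNdtop, one_mul]
          _ ≤ c := by rw [hc]; exact mul_le_mul_right h1 _
        calc ∫⁻ x in Q N k, F x * G ((N : ℝ) • x)
            ≤ ∫⁻ x in Q N k, c * G ((N : ℝ) • x) :=
              setLIntegral_mono (hGN.const_mul c) fun x hx =>
                mul_le_mul_left (hbound x hx) _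
          _ = c * ∫⁻ x in Q N k, G ((N : ℝ) • x) := lintegral_const_mul c hGN
          _ = c * (((N : ℝ≥0∞) ^ d)⁻¹ * ∫⁻ z in box d, G z) := by
              rw [setLIntegral_G_scaled hN k G hG hGper]
          _ = (∫⁻ y in Q N k, H y) * ∫⁻ z in box d, G z := by
              rw [hc, mul_mul_mul_comm, ENNReal.mul_inv_cancel hNd0 hNdtop, one_mul]
    _ = (∑' k : Fin d → Fin N, ∫⁻ y in Q N k, H y) * ∫⁻ z in box d, G z :=
        ENNReal.tsum_mul_right
    _ = (∫⁻ y in ⋃ k : Fin d → Fin N, Q N k, H y) * ∫⁻ z in box d, G z := by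
        rw [lintegral_iUnion₀ (μ := volume) (s := fun k : Fin d → Fin N => Q N k)
          (fun k => measurableSet_Icc.nullMeasurableSet) (Q_aedisjoint hN) H]
    _ ≤ (∫⁻ y in box d, H y) * ∫⁻ z in box d, G z :=
        mul_le_mul_left (lintegral_mono_set (Set.iUnion_subset fun k => Q_subset_box hN k)) _

end cubes

/-- **Improved Hölder inequality** (Proposition 3.4): for smooth `f, g` on `T^d`
and `r ∈ [1,∞]`, `|f g(λ·)|_r ≤ |f|_r |g|_r + C_r λ^{-1/r} |f|_{C¹} |g|_r`,
uniformly in `λ ∈ ℕ`, `λ ≥ 1`. -/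
theorem improved_holder (d : ℕ) (hd : 1 ≤ d) (r : ℝ≥0∞) (hr : 1 ≤ r) :
    ∃ C : ℝ≥0, ∀ (f g : Pt d → ℝ),
      ContDiff ℝ ((⊤:ℕ∞)) f → ZPer f →
      ContDiff ℝ ((⊤:ℕ∞)) g → ZPer g →
      ∀ lam : ℕ, 1 ≤ lam →
        eLpNorm (fun x => f x * g (fun i => (lam : ℝ) * x i)) r (μbox d)
          ≤ eLpNorm f r (μbox d) * eLpNorm g r (μbox d)
            + C * (lam : ℝ≥0∞) ^ (-(1 / r).toReal)
              * ENNReal.ofReal (C1norm d f) * eLpNorm g r (μbox d) := by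
  refine ⟨1, ?_⟩
  intro f g hf hfper hg hgper lam hlam
  have hfd : Differentiable ℝ f := hf.differentiable (by simp)
  have hfc : Continuous f := hf.continuous
  have hgc : Continuous g := hg.continuous
  have hN0 : (0:ℝ) < lam := by exact_mod_cast hlam
  set Lf := ⨆ x : Pt d, ‖fderiv ℝ f x‖ with hLfdef
  have hbddL : BddAbove (Set.range fun x : Pt d => ‖fderiv ℝ f x‖) :=
    bddAbove_of_per _ ((hf.continuous_fderiv (by simp)).norm)
      (fun x m => by rw [fderiv_per f hfd hfper x m])
  have hLle : ∀ x, ‖fderiv ℝ f x‖ ≤ Lf := fun x => le_ciSup hbddL x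
  have hL0 : 0 ≤ Lf := (norm_nonneg _).trans (hLle 0)
  have hbddS : BddAbove (Set.range fun x : Pt d => |f x|) :=
    bddAbove_of_per _ hfc.abs (fun x m => by rw [hfper x m])
  have hSle : ∀ x, |f x| ≤ ⨆ x : Pt d, |f x| := fun x => le_ciSup hbddS x
  have hS0 : (0:ℝ) ≤ ⨆ x : Pt d, |f x| := (abs_nonneg _).trans (hSle 0)
  have hLC1 : Lf ≤ C1norm d f := by rw [C1norm]; rw [← hLfdef]; linarith
  have hSC1 : (⨆ x : Pt d, |f x|) ≤ C1norm d f := by rw [C1norm]; rw [← hLfdef]; linarith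
  have hLip : ∀ x y : Pt d, ‖f x - f y‖ ≤ Lf * ‖x - y‖ := fun x y =>
    Convex.norm_image_sub_le_of_norm_fderiv_le (fun z _ => hfd z) (fun z _ => hLle z)
      convex_univ (Set.mem_univ y) (Set.mem_univ x)
  have hfun : ∀ x : Pt d, (fun i => (lam : ℝ) * x i) = (lam : ℝ) • x := by
    intro x; funext i; simp
  have hboxmeas : MeasurableSet (box d) := measurableSet_Icc
  have hunivbox : μbox d Set.univ = 1 := by
    rw [μbox, Measure.restrict_apply_univ, box, Real.volume_Icc_pi]
    simp
  have hμ0 : μbox d ≠ 0 := by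
    intro h
    rw [h] at hunivbox
    simp at hunivbox
  rcases eq_or_ne r ⊤ with hrtop | hrtop
  · -- case r = ∞
    subst hrtop
    set M := eLpNorm g ⊤ (μbox d) with hM
    set A := {x : Pt d | M < (‖g x‖₊ : ℝ≥0∞)} with hA
    have hAmeas : MeasurableSet A :=
      measurableSet_lt measurable_const hgc.measurable.nnnorm.coe_nnreal_ennreal
    have hboxnull : volume (A ∩ box d) = 0 := by
      have h1 : ∀ᵐ x ∂(μbox d), (‖g x‖₊ : ℝ≥0∞) ≤ M := by
        rw [hM, eLpNorm_exponent_top]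
        exact ae_le_eLpNormEssSup
      rw [μbox, ae_restrict_iff' hboxmeas, ae_iff] at h1
      refine measure_mono_null ?_ h1
      rintro x ⟨hxA, hxbox⟩
      intro hcon
      exact absurd (hcon hxbox) (not_le.2 hxA)
    have hAnull : volume A = 0 := by
      have hcover : A ⊆ ⋃ m : Fin d → ℤ,
          (· + (fun i => (m i : ℝ) : Pt d)) '' (A ∩ box d) := by
        intro x hx
        obtain ⟨y, m, hy, rfl⟩ := exists_rep d x
        refine Set.mem_iUnion.2 ⟨m, ⟨y, ⟨?_, hy⟩, rfl⟩⟩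
        have : g (y + fun i => (m i : ℝ)) = g y := hgper y m
        simpa [hA, this] using hx
      refine measure_mono_null hcover (measure_iUnion_null fun m => ?_)
      rw [Set.image_add_right, measure_preimage_add_right]
      exact hboxnull
    have hbound : ∀ᵐ x ∂(μbox d),
        (‖f x * g (fun i => (lam : ℝ) * x i)‖₊ : ℝ≥0∞)
          ≤ ENNReal.ofReal (C1norm d f) * M := by
      have h3 : volume ((fun x : Pt d => (lam : ℝ) • x) ⁻¹' A) = 0 := by
        rw [Measure.addHaar_preimage_smul volume (ne_of_gt hN0)]
        simp [hAnull]
      have h4 : ∀ᵐ x ∂(volume : Measure (Pt d)), (‖g ((lam : ℝ) • x)‖₊ : ℝ≥0∞) ≤ M := by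
        rw [ae_iff]
        refine measure_mono_null ?_ h3
        intro x hx
        exact not_le.1 hx
      rw [μbox]
      filter_upwards [ae_restrict_of_ae h4] with x hx
      rw [hfun x]
      calc (‖f x * g ((lam : ℝ) • x)‖₊ : ℝ≥0∞)
          = (‖f x‖₊ : ℝ≥0∞) * (‖g ((lam : ℝ) • x)‖₊ : ℝ≥0∞) := by
            rw [nnnorm_mul, ENNReal.coe_mul]
        _ ≤ ENNReal.ofReal (C1norm d f) * M := by
            refine mul_le_mul' ?_ hx
            rw [← enorm_eq_nnnorm, Real.enorm_eq_ofReal_abs]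
            exact ENNReal.ofReal_le_ofReal ((hSle x).trans hSC1)
    have final : eLpNorm (fun x => f x * g (fun i => (lam : ℝ) * x i)) ⊤ (μbox d)
        ≤ ENNReal.ofReal (C1norm d f) * M := by
      rw [eLpNorm_exponent_top, eLpNormEssSup]
      exact essSup_le_of_ae_le _ hbound
    refine final.trans ?_
    have hpow : (lam : ℝ≥0∞) ^ (-(1 / (⊤:ℝ≥0∞)).toReal) = 1 := by
      simp
    rw [hpow]
    simp only [ENNReal.coe_one, one_mul, mul_one]
    exact le_add_self
  · -- case r finite
    have hr0 : r ≠ 0 := (zero_lt_one.trans_le hr).ne'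
    set p := r.toReal with hpdef
    have hp1 : 1 ≤ p := by
      rw [← ENNReal.toReal_one]
      exact ENNReal.toReal_mono hrtop hr
    have hp0 : (0:ℝ) < p := zero_lt_one.trans_le hp1
    set φ := fun y : Pt d => |f y| + Lf / lam with hφdef
    have hφc : Continuous φ := hfc.abs.add continuous_const
    have hφ0 : ∀ y, 0 ≤ φ y := fun y => add_nonneg (abs_nonneg _) (by positivity)
    have step1 : eLpNorm (fun x => f x * g (fun i => (lam : ℝ) * x i)) r (μbox d)
        ≤ eLpNorm φ r (μbox d) * eLpNorm g r (μbox d) := by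
      rw [eLpNorm_eq_lintegral_rpow_enorm_toReal hr0 hrtop,
        eLpNorm_eq_lintegral_rpow_enorm_toReal hr0 hrtop,
        eLpNorm_eq_lintegral_rpow_enorm_toReal hr0 hrtop,
        ← ENNReal.mul_rpow_of_nonneg _ _ (by positivity : (0:ℝ) ≤ 1 / r.toReal)]
      simp only [enorm_eq_nnnorm]
      refine ENNReal.rpow_le_rpow ?_ (by positivity)
      have hkey := key_lemma (d := d) (N := lam) hlam
        (fun x => (‖f x‖₊ : ℝ≥0∞) ^ p) (fun y => (‖φ y‖₊ : ℝ≥0∞) ^ p)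
        (fun z => (‖g z‖₊ : ℝ≥0∞) ^ p)
        (hφc.measurable.nnnorm.coe_nnreal_ennreal.pow_const p)
        (hgc.measurable.nnnorm.coe_nnreal_ennreal.pow_const p)
        (fun x m => by simp only [hgper x m])
        (fun x y hxy => by
          refine ENNReal.rpow_le_rpow ?_ hp0.le
          have h2 := hLip x y
          have h3 : Lf * ‖x - y‖ ≤ Lf * (1 / lam) := mul_le_mul_of_nonneg_left hxy hL0
          have h4 := abs_sub_abs_le_abs_sub (f x) (f y)
          rw [Real.norm_eq_abs] at h2
          have hdiv : Lf * (1 / lam) = Lf / lam := by ring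
          have h1 : |f x| ≤ φ y := by rw [hφdef]; dsimp only; linarith
          have h5 : ‖f x‖ ≤ ‖φ y‖ := by
            rw [Real.norm_eq_abs, Real.norm_eq_abs, abs_of_nonneg (hφ0 y)]
            exact h1
          exact_mod_cast ENNReal.coe_le_coe.2
            (by rwa [← NNReal.coe_le_coe, coe_nnnorm, coe_nnnorm]))
      rw [μbox]
      refine le_trans (le_of_eq ?_) hkey
      refine setLIntegral_congr_fun hboxmeas (fun x _ => ?_)
      rw [hfun x, nnnorm_mul, ENNReal.coe_mul,
        ENNReal.mul_rpow_of_nonneg _ _ hp0.le]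
    have step2 : eLpNorm φ r (μbox d)
        ≤ eLpNorm f r (μbox d) + ENNReal.ofReal (Lf / lam) := by
      have hsplit : φ = (fun y => |f y|) + fun _ => Lf / lam := rfl
      rw [hsplit]
      refine le_trans (eLpNorm_add_le hfc.abs.aestronglyMeasurable
        aestronglyMeasurable_const hr) ?_
      have e1 : eLpNorm (fun y => |f y|) r (μbox d) = eLpNorm f r (μbox d) := by
        have : (fun y : Pt d => |f y|) = fun y => ‖f y‖ := by
          funext y; rw [Real.norm_eq_abs]
        rw [this, eLpNorm_norm]
      have e2 : eLpNorm (fun _ : Pt d => Lf / lam) r (μbox d)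
          = ENNReal.ofReal (Lf / lam) := by
        rw [eLpNorm_const _ hr0 hμ0, hunivbox, ENNReal.one_rpow, mul_one,
          Real.enorm_eq_ofReal (by positivity)]
      rw [e1, e2]
    have step3 : ENNReal.ofReal (Lf / lam)
        ≤ (lam : ℝ≥0∞) ^ (-(1 / r).toReal) * ENNReal.ofReal (C1norm d f) := by
      have e1 : ENNReal.ofReal (Lf / lam) = ENNReal.ofReal Lf * ((lam : ℝ≥0∞))⁻¹ := by
        rw [div_eq_mul_inv, ENNReal.ofReal_mul hL0, ENNReal.ofReal_inv_of_pos hN0,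
          ENNReal.ofReal_natCast]
      rw [e1, mul_comm, ← ENNReal.rpow_neg_one (lam : ℝ≥0∞)]
      refine mul_le_mul' ?_ (ENNReal.ofReal_le_ofReal hLC1)
      refine ENNReal.rpow_le_rpow_of_exponent_le (by exact_mod_cast hlam) ?_
      have h6 : ((1:ℝ≥0∞) / r).toReal = 1 / p := by
        rw [ENNReal.toReal_div, ENNReal.toReal_one]
      rw [h6]
      have : 1 / p ≤ 1 := by
        rw [div_le_one hp0]
        exact hp1
      linarith
    calc eLpNorm (fun x => f x * g (fun i => (lam : ℝ) * x i)) r (μbox d)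
        ≤ (eLpNorm f r (μbox d) + ENNReal.ofReal (Lf / lam)) * eLpNorm g r (μbox d) :=
          step1.trans (mul_le_mul_left step2 _)
      _ ≤ eLpNorm f r (μbox d) * eLpNorm g r (μbox d)
            + (1:ℝ≥0) * (lam : ℝ≥0∞) ^ (-(1 / r).toReal)
              * ENNReal.ofReal (C1norm d f) * eLpNorm g r (μbox d) := by
          rw [add_mul]
          refine add_le_add_right ?_ _
          simp only [ENNReal.coe_one, one_mul]
          exact mul_le_mul_left step3 _

end NonNewtonian
end
end
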